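/- If ψ is an n×n matrix with trace norm ‖ψ‖₁ ≤ s, then there exist nonnegative vectors (Xᵢ), (Yⱼ) with ‖X‖₂·‖Y‖₂ ≤ s and |ψᵢⱼ| ≤ XᵢYⱼ for all i, j. Explicitly, writing ψ = Σ_k λ_k |x^k⟩⟨y^k| with λ_k ≥ 0, unit vectors x^k, y^k and Σ_k λ_k ≤ s, one may take Xᵢ = (Σ_k λ_k |⟨x^k|i⟩|²)^{1/2} and Yⱼ = (Σ_k λ_k |⟨y^k|j⟩|²)^{1/2}. -/

import Mathlib

open scoped BigOperators Kronecker ComplexOrder Matrix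

/-- The ℓ²→ℓ² operator norm of a square complex matrix. -/
noncomputable def opNorm {n : Type*} [Fintype n] [DecidableEq n] (A : Matrix n n ℂ) : ℝ :=
  ‖Matrix.toEuclideanCLM (𝕜 := ℂ) A‖

/-- The trace norm (Schatten-1 norm) of a square complex matrix. -/
noncomputable def traceNorm {n : Type*} [Fintype n] [DecidableEq n] (A : Matrix n n ℂ) : ℝ :=
  (((Matrix.posSemidef_conjTranspose_mul_self A).1.eigenvectorUnitary.1 *
    Matrix.diagonal (((↑) : ℝ → ℂ) ∘ Real.sqrt ∘ (Matrix.posSemidef_conjTranspose_mul_self A).1.eigenvalues) *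
    (star (Matrix.posSemidef_conjTranspose_mul_self A).1.eigenvectorUnitary : Matrix n n ℂ)).trace).re

/-!
Writing `ψᵢⱼ = Σ_k (√λ_k x^k_i) · (√λ_k conj y^k_j)`, Cauchy–Schwarz in `k` gives `|ψᵢⱼ| ≤ XᵢYⱼ`,
and since each `x^k` is a unit vector, `‖X‖₂² = Σ_k λ_k Σᵢ |x^k_i|² = Σ_k λ_k ≤ s`; likewise for `Y`.
For the first part, a singular value decomposition `ψ = Σ_k σ_k u^k (v^k)*`, with `v^k` the
eigenvectors of `ψ*ψ`, `σ_k` the square roots of its eigenvalues and `σ_k u^k = ψ v^k`, is such a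
decomposition with `Σ_k σ_k = ‖ψ‖₁`.
-/

open Matrix

section UnitVectors

variable {ι : Type*} [Fintype ι]

lemma ofReal_sum_norm_sq (x : ι → ℂ) : ((∑ i, ‖x i‖ ^ 2 : ℝ) : ℂ) = star x ⬝ᵥ x := by
  push_cast
  simp [dotProduct, Complex.conj_mul']

lemma sum_norm_sq_eq_one {x : ι → ℂ} (hx : star x ⬝ᵥ x = 1) : ∑ i, ‖x i‖ ^ 2 = 1 := by
  exact_mod_cast (ofReal_sum_norm_sq x).trans hx

lemma OrthonormalBasis.star_dotProduct_self {κ : Type*} [Fintype κ]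
    (b : OrthonormalBasis κ ℂ (EuclideanSpace ℂ ι)) (k : κ) : star ⇑(b k) ⬝ᵥ ⇑(b k) = 1 := by
  rw [dotProduct_comm, ← EuclideanSpace.inner_eq_star_dotProduct, inner_self_eq_norm_sq_to_K,
    b.orthonormal.1 k]
  simp

lemma OrthonormalBasis.sum_vecMulVec_self [DecidableEq ι]
    (b : OrthonormalBasis ι ℂ (EuclideanSpace ℂ ι)) :
    ∑ k, vecMulVec ⇑(b k) (star ⇑(b k)) = 1 := by
  rw [← (EuclideanSpace.basisFun ι ℂ).toMatrix_orthonormalBasis_self_mul_conjTranspose b]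
  ext i j
  simp [Matrix.sum_apply, Matrix.mul_apply, vecMulVec_apply, Module.Basis.toMatrix_apply,
    EuclideanSpace.basisFun_repr]

lemma exists_unit_smul_eq [DecidableEq ι] (i₀ : ι) {w : ι → ℂ} {r : ℝ} (hr : 0 ≤ r)
    (hw : star w ⬝ᵥ w = (r ^ 2 : ℝ)) : ∃ u : ι → ℂ, star u ⬝ᵥ u = 1 ∧ (r : ℂ) • u = w := by
  rcases hr.eq_or_lt with rfl | hr
  · refine ⟨Pi.single i₀ 1, by simp [dotProduct, Pi.single_apply, apply_ite], ?_⟩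
    simp_all [dotProduct_star_self_eq_zero]
  · have hr' : (r : ℂ) ≠ 0 := by exact_mod_cast hr.ne'
    refine ⟨(r : ℂ)⁻¹ • w, ?_, by rw [smul_smul, mul_inv_cancel₀ hr', one_smul]⟩
    rw [star_smul, smul_dotProduct, dotProduct_smul, hw]
    simp only [star_inv₀, Complex.star_def, Complex.conj_ofReal, Complex.ofReal_pow, smul_eq_mul]
    field_simp

end UnitVectors

section Domination

variable {ι ι' κ : Type*} [Fintype κ] {lam : κ → ℝ}

theorem norm_apply_le_of_eq_sum_smul_vecMulVec (hl : ∀ k, 0 ≤ lam k) {ψ : Matrix ι ι' ℂ}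
    {x : κ → ι → ℂ} {y : κ → ι' → ℂ}
    (hψ : ψ = ∑ k, (lam k : ℂ) • vecMulVec (x k) (star (y k))) (i : ι) (j : ι') :
    ‖ψ i j‖ ≤ √(∑ k, lam k * ‖x k i‖ ^ 2) * √(∑ k, lam k * ‖y k j‖ ^ 2) :=
  calc ‖ψ i j‖ ≤ ∑ k, lam k * (‖x k i‖ * ‖y k j‖) := by
        rw [hψ, Matrix.sum_apply]
        refine (norm_sum_le _ _).trans_eq (Finset.sum_congr rfl fun k _ => ?_)
        simp [vecMulVec_apply, abs_of_nonneg (hl k)]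
    _ = ∑ k, √(lam k * ‖x k i‖ ^ 2) * √(lam k * ‖y k j‖ ^ 2) := by
        refine Finset.sum_congr rfl fun k _ => ?_
        rw [← Real.sqrt_mul (mul_nonneg (hl k) (sq_nonneg _)),
          show lam k * ‖x k i‖ ^ 2 * (lam k * ‖y k j‖ ^ 2) = (lam k * (‖x k i‖ * ‖y k j‖)) ^ 2 by
            ring,
          Real.sqrt_sq (mul_nonneg (hl k) (by positivity))]
    _ ≤ _ := Real.sum_sqrt_mul_sqrt_le _ (fun k => mul_nonneg (hl k) (sq_nonneg _))
        (fun k => mul_nonneg (hl k) (sq_nonneg _))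

theorem sum_sq_sqrt_sum_mul_norm_sq [Fintype ι] (hl : ∀ k, 0 ≤ lam k) {x : κ → ι → ℂ}
    (hx : ∀ k, star (x k) ⬝ᵥ x k = 1) :
    ∑ i, √(∑ k, lam k * ‖x k i‖ ^ 2) ^ 2 = ∑ k, lam k := by
  simp_rw [Real.sq_sqrt (Finset.sum_nonneg fun k _ => mul_nonneg (hl k) (sq_nonneg _))]
  rw [Finset.sum_comm]
  simp_rw [← Finset.mul_sum, sum_norm_sq_eq_one (hx _), mul_one]

theorem entrywise_domination_of_eq_sum_smul_vecMulVec [Fintype ι] [Fintype ι'] {s : ℝ}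
    (hl : ∀ k, 0 ≤ lam k) {ψ : Matrix ι ι' ℂ} {x : κ → ι → ℂ} {y : κ → ι' → ℂ}
    (hx : ∀ k, star (x k) ⬝ᵥ x k = 1) (hy : ∀ k, star (y k) ⬝ᵥ y k = 1) (hs : ∑ k, lam k ≤ s)
    (hψ : ψ = ∑ k, (lam k : ℂ) • vecMulVec (x k) (star (y k))) :
    (∀ i j, ‖ψ i j‖ ≤ √(∑ k, lam k * ‖x k i‖ ^ 2) * √(∑ k, lam k * ‖y k j‖ ^ 2)) ∧
      √(∑ i, √(∑ k, lam k * ‖x k i‖ ^ 2) ^ 2) * √(∑ j, √(∑ k, lam k * ‖y k j‖ ^ 2) ^ 2) ≤ s := by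
  refine ⟨norm_apply_le_of_eq_sum_smul_vecMulVec hl hψ, ?_⟩
  rw [sum_sq_sqrt_sum_mul_norm_sq hl hx, sum_sq_sqrt_sum_mul_norm_sq hl hy,
    Real.mul_self_sqrt (Finset.sum_nonneg fun k _ => hl k)]
  exact hs

end Domination

section SingularValueDecomposition

variable {n : Type*} [Fintype n]

lemma star_mulVec_dotProduct_mulVec_self {m : Type*} [Fintype m] (A : Matrix m n ℂ) (w : n → ℂ) :
    star (A *ᵥ w) ⬝ᵥ (A *ᵥ w) = star w ⬝ᵥ ((Aᴴ * A) *ᵥ w) := by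
  rw [star_mulVec, dotProduct_mulVec, vecMul_vecMul, ← dotProduct_mulVec]

variable [DecidableEq n]

lemma traceNorm_eq_sum_sqrt_eigenvalues (A : Matrix n n ℂ) :
    traceNorm A = ∑ k, √((posSemidef_conjTranspose_mul_self A).1.eigenvalues k) := by
  rw [traceNorm, Matrix.trace_mul_cycle, Unitary.coe_star_mul_self, Matrix.one_mul,
    Matrix.trace_diagonal]
  simp

theorem exists_rankOne_decomposition_sum_eq_traceNorm (A : Matrix n n ℂ) :
    ∃ (σ : n → ℝ) (u v : n → n → ℂ), (∀ k, 0 ≤ σ k) ∧ (∀ k, star (u k) ⬝ᵥ u k = 1) ∧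
      (∀ k, star (v k) ⬝ᵥ v k = 1) ∧ ∑ k, σ k = traceNorm A ∧
      A = ∑ k, (σ k : ℂ) • vecMulVec (u k) (star (v k)) := by
  set hH := posSemidef_conjTranspose_mul_self A
  set b := hH.1.eigenvectorBasis
  have hAb : ∀ k, star (A *ᵥ ⇑(b k)) ⬝ᵥ (A *ᵥ ⇑(b k)) = (√(hH.1.eigenvalues k) ^ 2 : ℝ) := by
    intro k
    rw [star_mulVec_dotProduct_mulVec_self, hH.1.mulVec_eigenvectorBasis, dotProduct_smul,
      b.star_dotProduct_self, Real.sq_sqrt (hH.eigenvalues_nonneg k)]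
    simp [Complex.real_smul]
  choose u hu hAu using fun k => exists_unit_smul_eq k (Real.sqrt_nonneg _) (hAb k)
  refine ⟨_, u, fun k => ⇑(b k), fun k => Real.sqrt_nonneg _, hu, b.star_dotProduct_self,
    (traceNorm_eq_sum_sqrt_eigenvalues A).symm, ?_⟩
  calc A = A * ∑ k, vecMulVec ⇑(b k) (star ⇑(b k)) := by rw [b.sum_vecMulVec_self, mul_one]
    _ = _ := by simp_rw [Matrix.mul_sum, mul_vecMulVec, ← hAu, smul_vecMulVec]

end SingularValueDecomposition

/-- a matrix of trace norm at most `s` is entrywise dominated by a rank-one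
pattern `XᵢYⱼ` with `‖X‖₂‖Y‖₂ ≤ s`, explicitly from any decomposition `ψ = Σ λ_k |x^k⟩⟨y^k|`. -/
theorem traceNorm_entrywise_domination {n : ℕ} (ψ : Matrix (Fin n) (Fin n) ℂ) (s : ℝ) :
    (traceNorm ψ ≤ s →
      ∃ X Y : Fin n → ℝ, (∀ i, 0 ≤ X i) ∧ (∀ j, 0 ≤ Y j) ∧
        Real.sqrt (∑ i, X i ^ 2) * Real.sqrt (∑ j, Y j ^ 2) ≤ s ∧
        ∀ i j, ‖ψ i j‖ ≤ X i * Y j) ∧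
    (∀ (m : ℕ) (lam : Fin m → ℝ) (x y : Fin m → (Fin n → ℂ)),
      (∀ k, 0 ≤ lam k) → (∀ k, star (x k) ⬝ᵥ x k = 1) → (∀ k, star (y k) ⬝ᵥ y k = 1) →
      (∑ k, lam k) ≤ s →
      ψ = ∑ k, (lam k : ℂ) • Matrix.vecMulVec (x k) (star (y k)) →
      (∀ i j, ‖ψ i j‖ ≤
          Real.sqrt (∑ k, lam k * ‖x k i‖ ^ 2) *
            Real.sqrt (∑ k, lam k * ‖y k j‖ ^ 2)) ∧
        Real.sqrt (∑ i, (Real.sqrt (∑ k, lam k * ‖x k i‖ ^ 2)) ^ 2) *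
          Real.sqrt (∑ j, (Real.sqrt (∑ k, lam k * ‖y k j‖ ^ 2)) ^ 2) ≤ s) := by
  refine ⟨fun hs => ?_, fun m lam x y hl hx hy hs hψ =>
    entrywise_domination_of_eq_sum_smul_vecMulVec hl hx hy hs hψ⟩
  obtain ⟨σ, u, v, hσ, hu, hv, hσ_sum, hψ⟩ := exists_rankOne_decomposition_sum_eq_traceNorm ψ
  obtain ⟨hdom, hnorm⟩ :=
    entrywise_domination_of_eq_sum_smul_vecMulVec hσ hu hv (hσ_sum ▸ hs) hψ
  exact ⟨_, _, fun _ => Real.sqrt_nonneg _, fun _ => Real.sqrt_nonneg _, hnorm, hdom⟩
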